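/- arXiv:1605.03400 — 2 statements merged into one kernel-verified Lean document; each statement's English description precedes it below -/
import Mathlib

section
/- Let $V$ be a complex normed space, $B : V \times V \to \mathbb{C}$ a sesquilinear form, $C_{\min} > 0$, and $\|\cdot\|_*$ a seminorm on $V$ such that the Gårding inequality $\operatorname{Re} B(v,v) + 2\|v\|_*^2 \geq C_{\min} \|v\|^2$ holds for all $v \in V$. Suppose $u, u_h \in V$ satisfy Galerkin orthogonality $B(u - u_h, w_h) = 0$ for all $w_h$ in a subspace $V_h \ni u_h$, $B$ is continuous with constant $C_B$, and the dual-norm estimate $\|u - u_h\|_*^2 \leq \eta \, C_B \|u - u_h\|^2$ holds with $4\eta C_B \leq C_{\min}$. Then $\|u - u_h\| \leq \frac{2 C_B}{C_{\min}} \inf_{v_h \in V_h} \|u - v_h\|$. -/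
/-!
Write `e = u - u_h`. Galerkin orthogonality against `v_h - u_h ∈ V_h` gives `B(e, e) = B(e, u - v_h)`,
so the Gårding inequality, continuity and the dual-norm estimate yield
`C_min ‖e‖² ≤ C_B ‖e‖ ‖u - v_h‖ + 2 η C_B ‖e‖²`. Since `2 η C_B ≤ C_min / 2`, the last term is absorbed
into the left-hand side, leaving `(C_min / 2) ‖e‖² ≤ C_B ‖e‖ ‖u - v_h‖`.
-/

theorem galerkin_apply_self_eq {R V W : Type*} [Ring R] [AddCommGroup V] [Module R V]
    [AddCommGroup W] (B : V → V → W) (haddr : ∀ v w₁ w₂, B v (w₁ + w₂) = B v w₁ + B v w₂)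
    {Vh : Submodule R V} {u uh vh : V} (huh : uh ∈ Vh) (hvh : vh ∈ Vh)
    (hGal : ∀ wh ∈ Vh, B (u - uh) wh = 0) :
    B (u - uh) (u - uh) = B (u - uh) (u - vh) := by
  conv_lhs => arg 2; rw [← sub_add_sub_cancel u vh uh]
  rw [haddr, hGal _ (Vh.sub_mem hvh huh), add_zero]

theorem le_div_mul_of_mul_sq_le {a b x y : ℝ} (ha : 0 < a) (hby : 0 ≤ b * y) (hx : 0 ≤ x)
    (h : a * x ^ 2 ≤ b * x * y) : x ≤ b / a * y := by
  rcases hx.eq_or_lt with rfl | hx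
  · rw [div_mul_eq_mul_div]
    positivity
  have hax : a * x ≤ b * y := le_of_mul_le_mul_right (by linarith) hx
  rw [div_mul_eq_mul_div, le_div_iff₀ ha]
  linarith

theorem stmt_6_general {V : Type*} [NormedAddCommGroup V] [NormedSpace ℂ V]
    (B : V → V → ℂ) (Nstar : V → ℝ) (Cmin CB η : ℝ)
    (hCmin : 0 < Cmin) (hCB : 0 < CB)
    (haddr : ∀ v w₁ w₂, B v (w₁ + w₂) = B v w₁ + B v w₂)
    (hgarding : ∀ v, Cmin * ‖v‖ ^ 2 ≤ (B v v).re + 2 * Nstar v ^ 2)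
    (hcont : ∀ v w, ‖B v w‖ ≤ CB * ‖v‖ * ‖w‖)
    (Vh : Submodule ℂ V) (u uh : V) (huh : uh ∈ Vh)
    (hGal : ∀ wh ∈ Vh, B (u - uh) wh = 0)
    (hdual : Nstar (u - uh) ^ 2 ≤ η * CB * ‖u - uh‖ ^ 2)
    (habs : 4 * η * CB ≤ Cmin) :
    ∀ vh ∈ Vh, ‖u - uh‖ ≤ 2 * CB / Cmin * ‖u - vh‖ := by
  intro vh hvh
  have hgarding_e :
      Cmin * ‖u - uh‖ ^ 2 ≤ CB * ‖u - uh‖ * ‖u - vh‖ + 2 * (η * CB * ‖u - uh‖ ^ 2) :=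
    calc Cmin * ‖u - uh‖ ^ 2 ≤ (B (u - uh) (u - uh)).re + 2 * Nstar (u - uh) ^ 2 := hgarding _
      _ ≤ ‖B (u - uh) (u - vh)‖ + 2 * (η * CB * ‖u - uh‖ ^ 2) := by
        rw [galerkin_apply_self_eq B haddr huh hvh hGal]
        gcongr
        exact Complex.re_le_norm _
      _ ≤ CB * ‖u - uh‖ * ‖u - vh‖ + 2 * (η * CB * ‖u - uh‖ ^ 2) := by gcongr; exact hcont _ _
  have habsorbed : Cmin / 2 * ‖u - uh‖ ^ 2 ≤ CB * ‖u - uh‖ * ‖u - vh‖ := by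
    nlinarith [sq_nonneg ‖u - uh‖]
  have hquasi := le_div_mul_of_mul_sq_le (by positivity) (by positivity) (norm_nonneg _) habsorbed
  rwa [div_div_eq_mul_div, mul_comm CB] at hquasi

/-- Abstract Schatz-type quasi-optimality (Céa lemma for indefinite sesquilinear forms):
under a Gårding inequality `Re B(v,v) + 2‖v‖_*² ≥ C_min ‖v‖²`, continuity with constant
`C_B`, Galerkin orthogonality and the dual-norm estimate
`‖u-u_h‖_*² ≤ η C_B ‖u-u_h‖²` with `4 η C_B ≤ C_min`, one has
`‖u-u_h‖ ≤ (2C_B/C_min) ‖u-v_h‖` for every `v_h` in the discrete space. -/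
theorem stmt_6 {V : Type*} [NormedAddCommGroup V] [NormedSpace ℂ V]
    (B : V → V → ℂ) (Nstar : V → ℝ) (Cmin CB η : ℝ)
    (hCmin : 0 < Cmin) (hCB : 0 < CB) (hη : 0 ≤ η)
    (haddr : ∀ v w₁ w₂, B v (w₁ + w₂) = B v w₁ + B v w₂)
    (hN : ∀ v, 0 ≤ Nstar v)
    (hgarding : ∀ v, Cmin * ‖v‖ ^ 2 ≤ (B v v).re + 2 * Nstar v ^ 2)
    (hcont : ∀ v w, ‖B v w‖ ≤ CB * ‖v‖ * ‖w‖)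
    (Vh : Submodule ℂ V) (u uh : V) (huh : uh ∈ Vh)
    (hGal : ∀ wh ∈ Vh, B (u - uh) wh = 0)
    (hdual : Nstar (u - uh) ^ 2 ≤ η * CB * ‖u - uh‖ ^ 2)
    (habs : 4 * η * CB ≤ Cmin) :
    ∀ vh ∈ Vh, ‖u - uh‖ ≤ 2 * CB / Cmin * ‖u - vh‖ :=
  stmt_6_general B Nstar Cmin CB η hCmin hCB haddr hgarding hcont Vh u uh huh hGal hdual habs
end

section
/- Let $V$ be a complex Hilbert space, $B$ a continuous sesquilinear form on $V$ with constant $C_B$, satisfying the Gårding inequality $\operatorname{Re} B(v,v) + 2 k^2 \|v\|_0^2 \geq C_{\min} \|v\|^2$ where $\|\cdot\|_0 \leq k^{-1}\|\cdot\|$ is a weaker seminorm. Suppose for every $v \in V$ there is $z \in V$ solving the dual problem $B(\psi, z) = 2k^2 \langle \psi, v \rangle_0$ for all $\psi$, with stability bound $\|z\| \leq C_s k^{q+1} \|v\|$ for some $q \geq 0$, $C_s > 0$, $k \geq k_0 > 0$. Then the inf-sup constant satisfies $\inf_{v \neq 0} \sup_{\psi \neq 0} \frac{\operatorname{Re} B(v,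 \psi)}{\|v\| \|\psi\|} \geq \frac{C_{\min}}{(k_0^{-(q+1)} + C_s) \, k^{q+1}}$. -/
/-!
Test with `ψ = v + z`, where `z` solves the dual problem for `v`: then
`B(v, ψ) = B(v, v) + 2k²‖v‖₀²`, whose real part is at least `C_min ‖v‖²` by Gårding, while
`‖ψ‖ ≤ (1 + C_s k^{q+1}) ‖v‖ ≤ (k₀^{-(q+1)} + C_s) k^{q+1} ‖v‖` because `k ≥ k₀`.
-/

lemma one_le_inv_pow_mul_pow {k k0 : ℝ} (hk0 : 0 < k0) (hk : k0 ≤ k) (n : ℕ) :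
    1 ≤ (k0 ^ n)⁻¹ * k ^ n := by
  rw [← div_eq_inv_mul, one_le_div (pow_pos hk0 n)]
  exact pow_le_pow_left₀ hk0.le hk n

lemma norm_add_le_of_norm_le_mul_pow {E : Type*} [SeminormedAddCommGroup E] {v z : E}
    {k k0 C : ℝ} {n : ℕ} (hk0 : 0 < k0) (hk : k0 ≤ k) (hz : ‖z‖ ≤ C * k ^ n * ‖v‖) :
    ‖v + z‖ ≤ ((k0 ^ n)⁻¹ + C) * k ^ n * ‖v‖ := by
  have hv : ‖v‖ ≤ (k0 ^ n)⁻¹ * k ^ n * ‖v‖ :=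
    le_mul_of_one_le_left (norm_nonneg v) (one_le_inv_pow_mul_pow hk0 hk n)
  calc ‖v + z‖ ≤ ‖v‖ + ‖z‖ := norm_add_le v z
    _ ≤ (k0 ^ n)⁻¹ * k ^ n * ‖v‖ + C * k ^ n * ‖v‖ := add_le_add hv hz
    _ = ((k0 ^ n)⁻¹ + C) * k ^ n * ‖v‖ := by ring

lemma div_mul_mul_le_of_mul_sq_le {c D a b r : ℝ} (hc : 0 ≤ c) (ha : 0 ≤ a) (hb : 0 ≤ b)
    (hbD : b ≤ D * a) (hr : c * a ^ 2 ≤ r) : c / D * (a * b) ≤ r := by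
  rcases le_or_gt D 0 with hD | hD
  · have : c / D * (a * b) ≤ 0 :=
      mul_nonpos_of_nonpos_of_nonneg (div_nonpos_of_nonneg_of_nonpos hc hD) (mul_nonneg ha hb)
    nlinarith [sq_nonneg a]
  · calc c / D * (a * b) ≤ c / D * (a * (D * a)) := by gcongr
      _ = c * a ^ 2 := by field_simp
      _ ≤ r := hr

lemma garding_le_re_apply_add_dual {V : Type*} [NormedAddCommGroup V]
    {B inner0 : V → V → ℂ} {N0 : V → ℝ} {k Cmin : ℝ}
    (haddr : ∀ v w₁ w₂, B v (w₁ + w₂) = B v w₁ + B v w₂)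
    (hinner : ∀ v, inner0 v v = ((N0 v ^ 2 : ℝ) : ℂ))
    (hgarding : ∀ v, Cmin * ‖v‖ ^ 2 ≤ (B v v).re + 2 * k ^ 2 * N0 v ^ 2)
    {v z : V} (hz : ∀ ψ, B ψ z = 2 * k ^ 2 * inner0 ψ v) :
    Cmin * ‖v‖ ^ 2 ≤ (B v (v + z)).re := by
  have hB : B v (v + z) = B v v + ((2 * k ^ 2 * N0 v ^ 2 : ℝ) : ℂ) := by
    rw [haddr, hz v, hinner]
    push_cast
    ring
  rw [hB, Complex.add_re, Complex.ofReal_re]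
  exact hgarding v

theorem stmt_7_general {V : Type*} [NormedAddCommGroup V]
    (B : V → V → ℂ) (inner0 : V → V → ℂ) (N0 : V → ℝ)
    (k k0 Cmin Cs : ℝ) (q : ℕ)
    (hk0 : 0 < k0) (hk : k0 ≤ k) (hCmin : 0 < Cmin)
    (haddr : ∀ v w₁ w₂, B v (w₁ + w₂) = B v w₁ + B v w₂)
    (hinner : ∀ v, inner0 v v = ((N0 v ^ 2 : ℝ) : ℂ))
    (hgarding : ∀ v, Cmin * ‖v‖ ^ 2 ≤ (B v v).re + 2 * k ^ 2 * N0 v ^ 2)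
    (hdual : ∀ v : V, ∃ z : V, (∀ ψ, B ψ z = 2 * k ^ 2 * inner0 ψ v) ∧
      ‖z‖ ≤ Cs * k ^ (q + 1) * ‖v‖) :
    ∀ v : V, v ≠ 0 → ∃ ψ : V, ψ ≠ 0 ∧
      Cmin / (((k0 ^ (q + 1))⁻¹ + Cs) * k ^ (q + 1)) * (‖v‖ * ‖ψ‖) ≤ (B v ψ).re := by
  intro v hv
  obtain ⟨z, hz, hznorm⟩ := hdual v
  have hre := garding_le_re_apply_add_dual haddr hinner hgarding hz
  have hψ : v + z ≠ 0 := by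
    rintro h
    have hB0 : B v 0 = 0 := (AddMonoidHom.mk' (B v) (haddr v)).map_zero
    rw [h, hB0, Complex.zero_re] at hre
    exact (mul_pos hCmin (pow_pos (norm_pos_iff.mpr hv) 2)).not_ge hre
  exact ⟨v + z, hψ, div_mul_mul_le_of_mul_sq_le hCmin.le (norm_nonneg v) (norm_nonneg _)
    (norm_add_le_of_norm_le_mul_pow hk0 hk hznorm) hre⟩

/-- Abstract inf-sup bound from polynomial stability of a dual problem: if `B` satisfies
the Gårding inequality `Re B(v,v) + 2k²‖v‖₀² ≥ C_min ‖v‖²`, the seminorm `‖·‖₀` is weaker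
(`‖v‖₀ ≤ k⁻¹‖v‖`), and for every `v` the dual problem `B(ψ,z) = 2k²⟨ψ,v⟩₀` has a solution
with `‖z‖ ≤ C_s k^{q+1} ‖v‖`, then for every `v ≠ 0` there is a test function `ψ ≠ 0` with
`Re B(v,ψ) ≥ C_min/((k₀^{-(q+1)} + C_s) k^{q+1}) ‖v‖ ‖ψ‖`, i.e. the inf-sup constant is
at least `C_min/((k₀^{-(q+1)} + C_s) k^{q+1})`. -/
theorem stmt_7 {V : Type*} [NormedAddCommGroup V] [InnerProductSpace ℂ V] [CompleteSpace V]
    (B : V → V → ℂ) (inner0 : V → V → ℂ) (N0 : V → ℝ)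
    (k k0 Cmin Cs : ℝ) (q : ℕ)
    (hk0 : 0 < k0) (hk : k0 ≤ k) (hCmin : 0 < Cmin) (hCs : 0 < Cs)
    (haddr : ∀ v w₁ w₂, B v (w₁ + w₂) = B v w₁ + B v w₂)
    (hN0 : ∀ v, 0 ≤ N0 v)
    (hweak : ∀ v, N0 v ≤ k⁻¹ * ‖v‖)
    (hinner : ∀ v, inner0 v v = ((N0 v ^ 2 : ℝ) : ℂ))
    (hgarding : ∀ v, Cmin * ‖v‖ ^ 2 ≤ (B v v).re + 2 * k ^ 2 * N0 v ^ 2)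
    (hdual : ∀ v : V, ∃ z : V, (∀ ψ, B ψ z = 2 * k ^ 2 * inner0 ψ v) ∧
      ‖z‖ ≤ Cs * k ^ (q + 1) * ‖v‖) :
    ∀ v : V, v ≠ 0 → ∃ ψ : V, ψ ≠ 0 ∧
      Cmin / (((k0 ^ (q + 1))⁻¹ + Cs) * k ^ (q + 1)) * (‖v‖ * ‖ψ‖) ≤ (B v ψ).re :=
  stmt_7_general B inner0 N0 k k0 Cmin Cs q hk0 hk hCmin haddr hinner hgarding hdual
end
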